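/- arXiv:1601.00399 — 2 statements merged into one kernel-verified Lean document; each statement's English description precedes it below -/
import Mathlib

section
/- Compatibility of synthesis with marginals on localization spaces: let A ⊆ [n] with |A| ≥ 2, B ∈ P̄(A), F ∈ H_B, and A' ⊆ A with |A'| ≥ 2. If B ⊆ A' then M_{A'}(φ_A F) = φ_{A'} F, and if B ⊄ A' then M_{A'}(φ_A F) = 0. Moreover, if B ≠ ∅ then M_∅(φ_A F) = 0. -/
/-!
Unfolding `φ_A` and `M_{A'}`, the value `M_{A'}(φ_A F)(τ)` is a sum over `π ∈ Γ(B)` of `F(π)`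
times the number of `σ ∈ Γ(A)` that contain `π` as an infix and induce `τ` on `A'`. Restricting
to `A \ (B \ {b})` contracts the block `π` to its letter `b`; this is a bijection from the rankings
of `A` containing `π` onto `Γ(A \ (B \ {b}))`, and (for `b ∈ A'` whenever `B` meets `A'`) it
turns that number into the size of a fibre of the restriction map onto `Γ(A' \ (B \ {b}))`.
All fibres of a restriction map have the same size, since relabelling letters permutes them, so
`M_{A'}(φ_A F)(τ) = (∑_{π|_{A'} ⊑ τ} F(π)) / |A' \ (B \ {b})|!`. For `B ⊆ A'` this is
`φ_{A'} F(τ)`; otherwise the sum regroups into values of the marginal of `F` on `B ∩ A' ⊊ B`,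
which vanish for `F ∈ H_B`. The statement about `M_∅` is the case `A' = ∅`.
-/

open Finset
open scoped List

abbrev Word (n : ℕ) := List (Fin n)

/-- `Γ(A)`: duplicate-free words whose set of letters is exactly `A`. -/
noncomputable def rankings (n : ℕ) (A : Finset (Fin n)) : Finset (Word n) :=
  A.toList.permutations.toFinset

/-- All duplicate-free words on `[n]`. -/
noncomputable def allWords (n : ℕ) : Finset (Word n) :=
  Finset.univ.biUnion fun A : Finset (Fin n) => rankings n A

def IsRanking {n : ℕ} (A : Finset (Fin n)) (w : Word n) : Prop :=
  w.Nodup ∧ w.toFinset = A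

instance {n : ℕ} (A : Finset (Fin n)) (w : Word n) : Decidable (IsRanking A w) :=
  inferInstanceAs (Decidable (w.Nodup ∧ w.toFinset = A))

/-- Membership in `L(Γ(A))`: functions supported on `Γ(A)`. -/
def MemL {n : ℕ} (A : Finset (Fin n)) (F : Word n → ℝ) : Prop :=
  ∀ w, F w ≠ 0 → IsRanking A w

/-- Marginal operator `M_B` (with the convention `M_∅ F = (Σ F)·δ_0̄`). -/
noncomputable def marg {n : ℕ} (B : Finset (Fin n)) (F : Word n → ℝ) : Word n → ℝ :=
  fun π => if IsRanking B π then ∑ σ ∈ allWords n, (if π <+ σ then F σ else 0) else 0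

/-- Membership in the localization space `H_B` (for `B = ∅` this is `L(Γ(∅)) = ℝ·δ_0̄`). -/
def MemH {n : ℕ} (B : Finset (Fin n)) (F : Word n → ℝ) : Prop :=
  MemL B F ∧
    (∀ B' : Finset (Fin n), B' ⊂ B → 2 ≤ B'.card → marg B' F = 0) ∧
    (2 ≤ B.card → ∑ π ∈ rankings n B, F π = 0)

/-- `P̄(A) = {B ⊆ A : |B| ≥ 2} ∪ {∅}`. -/
def Pbar {n : ℕ} (A : Finset (Fin n)) : Finset (Finset (Fin n)) :=
  A.powerset.filter fun B => 2 ≤ B.card ∨ B = ∅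

/-- Synthesis operator `φ_A`. -/
noncomputable def synth {n : ℕ} (A : Finset (Fin n)) (F : Word n → ℝ) : Word n → ℝ :=
  fun σ =>
    if IsRanking A σ then
      F [] / (Nat.factorial A.card : ℝ) +
        ∑ π ∈ allWords n,
          (if π ≠ [] ∧ π <:+: σ then F π / (Nat.factorial (A.card - π.length + 1) : ℝ) else 0)
    else 0

/-- Dirac function `δ_π`. -/
noncomputable def dirac {n : ℕ} (π : Word n) : Word n → ℝ :=
  fun w => if w = π then 1 else 0

/-- `σ|_C`: the induced word of `σ` on `C`. -/
def restrictWord {n : ℕ} (σ : Word n) (C : Finset (Fin n)) : Word n :=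
  σ.filter fun a => decide (a ∈ C)

open scoped Nat

section Substitution

variable {α : Type*} [DecidableEq α]

def substWord (b : α) (π w : List α) : List α :=
  w.flatMap fun x => if x = b then π else [x]

theorem substWord_of_notMem {b : α} {w : List α} (π : List α) (h : b ∉ w) :
    substWord b π w = w := by
  conv_rhs => rw [← List.flatMap_singleton' w]
  refine List.flatMap_congr fun x hx => if_neg ?_
  rintro rfl
  exact h hx

theorem substWord_append_cons {b : α} {u v : List α} (π : List α) (h : b ∉ u ++ v) :
    substWord b π (u ++ b :: v) = u ++ π ++ v := by
  have hu : b ∉ u := fun hu => h (List.mem_append_left v hu)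
  have hv : b ∉ v := fun hv => h (List.mem_append_right u hv)
  rw [substWord, List.flatMap_append, List.flatMap_cons, if_pos rfl, ← substWord, ← substWord,
    substWord_of_notMem π hu, substWord_of_notMem π hv, List.append_assoc]

theorem List.Nodup.filter_eq_singleton {l : List α} (hl : l.Nodup) {b : α} (hb : b ∈ l) :
    l.filter (fun x => decide (x = b)) = [b] := by
  rw [List.filter_eq, List.count_eq_one_of_mem hl hb, List.replicate_one]

theorem exists_injective_map_eq {l₁ l₂ : List α} (h₁ : l₁.Nodup) (h₂ : l₂.Nodup)
    (h : ∀ x, x ∈ l₁ ↔ x ∈ l₂) :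
    ∃ e : α → α, e.Injective ∧ l₁.map e = l₂ ∧ ∀ x ∉ l₁, e x = x := by
  have hlen : l₁.length = l₂.length := ((List.perm_ext_iff_of_nodup h₁ h₂).2 h).length_eq
  -- `idxOf x = length` for `x ∉ l₁`, where `getD` falls back to `x`
  set e : α → α := fun x => l₂.getD (l₁.idxOf x) x
  have he_out : ∀ x ∉ l₁, e x = x := fun x hx =>
    List.getD_eq_default _ _ (by rw [List.idxOf_eq_length_iff.2 hx, hlen])
  have he_get : ∀ (i : ℕ) (hi : i < l₁.length), e l₁[i] = l₂[i] := fun i hi => by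
    simp only [e, h₁.idxOf_getElem]
    exact List.getD_eq_getElem _ _ _
  have he_in : ∀ x ∈ l₁, e x ∈ l₁ := fun x hx => by
    rw [← List.getElem_idxOf (List.idxOf_lt_length_iff.2 hx), he_get, h]
    exact List.getElem_mem _
  refine ⟨e, fun x y hxy => ?_, List.ext_getElem (by simp [hlen]) fun i hi _ => ?_, he_out⟩
  · by_cases hx : x ∈ l₁ <;> by_cases hy : y ∈ l₁
    · rw [← List.getElem_idxOf (List.idxOf_lt_length_iff.2 hx),
        ← List.getElem_idxOf (List.idxOf_lt_length_iff.2 hy), he_get, he_get,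
        h₂.getElem_inj_iff] at hxy
      rw [← List.getElem_idxOf (List.idxOf_lt_length_iff.2 hx)]
      simp only [hxy, List.getElem_idxOf]
    · exact absurd (he_out y hy ▸ hxy ▸ he_in x hx) hy
    · exact absurd (he_out x hx ▸ hxy.symm ▸ he_in y hy) hx
    · rwa [he_out x hx, he_out y hy] at hxy
  · rw [List.getElem_map, he_get]

end Substitution

section Rankings

variable {n : ℕ} {A B C : Finset (Fin n)} {σ τ π w : Word n}

theorem mem_rankings : w ∈ rankings n A ↔ IsRanking A w := by
  rw [rankings, List.mem_toFinset, List.mem_permutations, IsRanking]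
  refine ⟨fun h => ⟨h.symm.nodup A.nodup_toList, by rw [List.toFinset_eq_of_perm _ _ h,
    Finset.toList_toFinset]⟩, fun ⟨hw, hA⟩ => ?_⟩
  rw [List.perm_ext_iff_of_nodup hw A.nodup_toList]
  intro a
  rw [Finset.mem_toList, ← hA, List.mem_toFinset]

theorem mem_allWords : w ∈ allWords n ↔ w.Nodup := by
  simp only [allWords, mem_biUnion, mem_univ, true_and, mem_rankings]
  exact ⟨fun ⟨_, h⟩ => h.1, fun h => ⟨w.toFinset, h, rfl⟩⟩

theorem rankings_subset_allWords : rankings n A ⊆ allWords n :=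
  fun _ hw => mem_allWords.2 (mem_rankings.1 hw).1

theorem card_rankings (A : Finset (Fin n)) : #(rankings n A) = (#A)! := by
  rw [rankings, List.toFinset_card_of_nodup (List.nodup_permutations _ A.nodup_toList),
    List.length_permutations, Finset.length_toList]

theorem IsRanking.mem_iff (h : IsRanking A w) {x : Fin n} : x ∈ w ↔ x ∈ A := by
  rw [← h.2, List.mem_toFinset]

theorem IsRanking.length_eq (h : IsRanking A w) : w.length = #A := by
  rw [← h.2, List.toFinset_card_of_nodup h.1]

theorem IsRanking.ne_nil (h : IsRanking A w) (hA : A.Nonempty) : w ≠ [] := by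
  rintro rfl
  obtain ⟨a, ha⟩ := hA
  exact List.not_mem_nil (h.mem_iff.2 ha)

theorem isRanking_empty_iff : IsRanking ∅ w ↔ w = [] :=
  ⟨fun h => List.toFinset_eq_empty_iff _ |>.1 h.2, by rintro rfl; exact ⟨List.nodup_nil, rfl⟩⟩

theorem isRanking_congr_perm {w₁ w₂ : Word n} (h : w₁.Perm w₂) :
    IsRanking A w₁ ↔ IsRanking A w₂ := by
  rw [IsRanking, IsRanking, h.nodup_iff, List.toFinset_eq_of_perm _ _ h]

theorem isRanking_append_iff (hπ : IsRanking B π) :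
    IsRanking A (w ++ π) ↔ B ⊆ A ∧ IsRanking (A \ B) w := by
  simp only [IsRanking, List.nodup_append, List.toFinset_append, hπ.1, hπ.2, true_and]
  constructor
  · rintro ⟨⟨hw, hdisj⟩, rfl⟩
    refine ⟨subset_union_right, hw, ?_⟩
    ext x
    simp only [mem_sdiff, mem_union, List.mem_toFinset]
    exact ⟨fun hx => ⟨Or.inl hx, fun hxB => hdisj x hx x (hπ.mem_iff.2 hxB) rfl⟩,
      fun ⟨hx, hxB⟩ => hx.resolve_right hxB⟩
  · rintro ⟨hBA, hw, hwA⟩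
    refine ⟨⟨hw, fun x hx y hy hxy => ?_⟩, hwA ▸ sdiff_union_of_subset hBA⟩
    rw [← List.mem_toFinset, hwA, hxy] at hx
    exact (mem_sdiff.1 hx).2 (hπ.mem_iff.1 hy)

theorem isRanking_append_append_iff {u v : Word n} (hπ : IsRanking B π) :
    IsRanking A (u ++ π ++ v) ↔ B ⊆ A ∧ IsRanking (A \ B) (u ++ v) := by
  rw [← isRanking_append_iff hπ, isRanking_congr_perm]
  simpa only [List.append_assoc] using (List.perm_append_comm (l₁ := π) (l₂ := v)).append_left u

theorem IsRanking.restrict (h : IsRanking A w) (C : Finset (Fin n)) :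
    IsRanking (A ∩ C) (restrictWord w C) := by
  refine ⟨h.1.filter _, ?_⟩
  rw [restrictWord, List.toFinset_filter, h.2]
  ext x
  simp

theorem restrictWord_append (u v : Word n) (C : Finset (Fin n)) :
    restrictWord (u ++ v) C = restrictWord u C ++ restrictWord v C :=
  List.filter_append u v

theorem restrictWord_eq_self (h : ∀ x ∈ w, x ∈ C) : restrictWord w C = w :=
  List.filter_eq_self.2 fun x hx => decide_eq_true (h x hx)

theorem IsRanking.restrictWord_self (h : IsRanking A w) : restrictWord w A = w :=
  restrictWord_eq_self fun _ hx => h.mem_iff.1 hx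

theorem restrictWord_restrictWord (w : Word n) (h : C ⊆ B) :
    restrictWord (restrictWord w B) C = restrictWord w C := by
  simp only [restrictWord, List.filter_filter]
  refine List.filter_congr fun x _ => ?_
  by_cases hx : x ∈ C
  · simp [hx, h hx]
  · simp [hx]

theorem sublist_iff_restrictWord_eq (hσ : IsRanking A σ) (hτ : IsRanking (A ∩ C) τ) :
    τ.Sublist σ ↔ restrictWord σ C = τ := by
  refine ⟨fun h => ?_, fun h => h ▸ List.filter_sublist⟩
  have hτC : restrictWord τ C = τ :=
    restrictWord_eq_self fun x hx => (mem_inter.1 (hτ.mem_iff.1 hx)).2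
  refine ((hτC ▸ h.filter _ : τ.Sublist (restrictWord σ C)).eq_of_length ?_).symm
  rw [hτ.length_eq, (hσ.restrict C).length_eq]

end Rankings

section Fibers

variable {n : ℕ} {A C : Finset (Fin n)} {ρ : Word n}

theorem card_filter_restrictWord_le {ρ₁ ρ₂ : Word n} (hCA : C ⊆ A) (h₁ : IsRanking C ρ₁)
    (h₂ : IsRanking C ρ₂) :
    #{σ ∈ rankings n A | restrictWord σ C = ρ₁} ≤ #{σ ∈ rankings n A | restrictWord σ C = ρ₂} := by
  obtain ⟨e, he, hmap, hfix⟩ :=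
    exists_injective_map_eq h₁.1 h₂.1 fun x => by rw [h₁.mem_iff, h₂.mem_iff]
  have he_mem : ∀ x, e x ∈ C ↔ x ∈ C := fun x => by
    by_cases hx : x ∈ ρ₁
    · exact iff_of_true (h₂.mem_iff.1 (hmap ▸ List.mem_map_of_mem hx)) (h₁.mem_iff.1 hx)
    · rw [hfix x hx]
  have he_image : A.image e = A := by
    refine eq_of_subset_of_card_le (fun y hy => ?_) (card_image_of_injective A he).ge
    obtain ⟨x, hx, rfl⟩ := mem_image.1 hy
    by_cases hxC : x ∈ C
    · exact hCA ((he_mem x).2 hxC)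
    · rwa [hfix x (mt h₁.mem_iff.1 hxC)]
  refine card_le_card_of_injOn (List.map e) (fun σ hσ => ?_)
    fun _ _ _ _ h => List.map_injective_iff.2 he h
  simp only [coe_filter, Set.mem_ofPred_eq, mem_rankings] at hσ ⊢
  refine ⟨⟨hσ.1.1.map he, by rw [← he_image, ← hσ.1.2]; ext; simp⟩, ?_⟩
  rw [restrictWord, List.filter_map, ← hmap, ← hσ.2, restrictWord]
  congr 2
  funext x
  simp [he_mem]

theorem card_filter_restrictWord_mul (hCA : C ⊆ A) (hρ : IsRanking C ρ) :
    #{σ ∈ rankings n A | restrictWord σ C = ρ} * (#C)! = (#A)! := by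
  have hmaps : Set.MapsTo (restrictWord · C) (rankings n A) (rankings n C) := fun σ hσ => by
    simpa only [mem_coe, mem_rankings, inter_eq_right.2 hCA] using (mem_rankings.1 hσ).restrict C
  rw [← card_rankings A, card_eq_sum_card_fiberwise hmaps, ← card_rankings C, mul_comm,
    ← smul_eq_mul, ← sum_const]
  refine sum_congr rfl fun ρ' hρ' => le_antisymm ?_ ?_
  · exact card_filter_restrictWord_le hCA hρ (mem_rankings.1 hρ')
  · exact card_filter_restrictWord_le hCA (mem_rankings.1 hρ') hρ

end Fibers

section Contraction

variable {n : ℕ} {A A' B : Finset (Fin n)} {σ τ π : Word n} {b : Fin n}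

theorem sdiff_erase_sdiff_singleton (hb : b ∈ B) : (A \ B.erase b) \ {b} = A \ B := by
  ext x
  by_cases hx : x = b <;> simp [hx, hb]

theorem card_sdiff_erase (hBA : B ⊆ A) (hb : b ∈ B) : #(A \ B.erase b) = #A - #B + 1 := by
  have hB := card_le_card hBA
  have hB₀ := card_pos.2 ⟨b, hb⟩
  rw [card_sdiff_of_subset ((erase_subset b B).trans hBA), card_erase_of_mem hb]
  omega

theorem restrictWord_append_append {u v : Word n} (hBA : B ⊆ A) (hπ : IsRanking B π)
    (hb : b ∈ B) (huv : IsRanking (A \ B) (u ++ v)) :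
    restrictWord (u ++ π ++ v) (A \ B.erase b) = u ++ b :: v := by
  have hA₀ : ∀ x ∈ u ++ v, x ∈ A \ B.erase b := fun x hx => by
    have := huv.mem_iff.1 hx
    simp only [mem_sdiff, mem_erase] at this ⊢
    tauto
  have hπ₀ : restrictWord π (A \ B.erase b) = [b] := by
    rw [← hπ.1.filter_eq_singleton (hπ.mem_iff.2 hb), restrictWord]
    refine List.filter_congr fun x hx => ?_
    have := hπ.mem_iff.1 hx
    by_cases hxb : x = b <;> simp [hxb, this, hBA this, hBA hb]
  rw [restrictWord_append, restrictWord_append, hπ₀,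
    restrictWord_eq_self fun x hx => hA₀ x (List.mem_append_left v hx),
    restrictWord_eq_self fun x hx => hA₀ x (List.mem_append_right u hx)]
  simp

theorem IsRanking.notMem_of_sdiff (h : IsRanking (A \ B) τ) (hb : b ∈ B) : b ∉ τ :=
  fun hbτ => (mem_sdiff.1 (h.mem_iff.1 hbτ)).2 hb

theorem IsRanking.exists_eq_append_cons {σ' : Word n} (hσ' : IsRanking (A \ B.erase b) σ')
    (hBA : B ⊆ A) (hb : b ∈ B) : ∃ u v, σ' = u ++ b :: v ∧ IsRanking (A \ B) (u ++ v) := by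
  obtain ⟨u, v, rfl⟩ := List.append_of_mem (hσ'.mem_iff.2 (mem_sdiff.2 ⟨hBA hb, notMem_erase b B⟩))
  refine ⟨u, v, rfl, ?_⟩
  have hb' : IsRanking {b} [b] := ⟨List.nodup_singleton b, rfl⟩
  rw [← sdiff_erase_sdiff_singleton (A := A) hb]
  exact ((isRanking_append_append_iff hb').1 (by simpa using hσ')).2

theorem substWord_restrictWord (hBA : B ⊆ A) (hπ : IsRanking B π) (hb : b ∈ B)
    (hσ : IsRanking A σ) (h : π <:+: σ) : substWord b π (restrictWord σ (A \ B.erase b)) = σ := by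
  obtain ⟨u, v, rfl⟩ := h
  have huv := ((isRanking_append_append_iff hπ).1 hσ).2
  rw [restrictWord_append_append hBA hπ hb huv, substWord_append_cons _ (huv.notMem_of_sdiff hb)]

theorem card_filter_infix (hBA : B ⊆ A) (hπ : IsRanking B π) (hb : b ∈ B) (p : Word n → Prop)
    [DecidablePred p] :
    #{σ ∈ rankings n A | π <:+: σ ∧ p (restrictWord σ (A \ B.erase b))} =
      #{σ ∈ rankings n (A \ B.erase b) | p σ} := by
  refine card_nbij' (restrictWord · (A \ B.erase b)) (substWord b π) (fun σ hσ => ?_)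
    (fun σ' hσ' => ?_) (fun σ hσ => ?_) (fun σ' hσ' => ?_)
  · simp only [coe_filter, Set.mem_ofPred_eq, mem_rankings] at hσ ⊢
    refine ⟨?_, hσ.2.2⟩
    simpa only [inter_eq_right.2 sdiff_subset] using hσ.1.restrict (A \ B.erase b)
  · simp only [coe_filter, Set.mem_ofPred_eq, mem_rankings] at hσ' ⊢
    obtain ⟨u, v, rfl, huv⟩ := hσ'.1.exists_eq_append_cons hBA hb
    rw [substWord_append_cons _ (huv.notMem_of_sdiff hb), restrictWord_append_append hBA hπ hb huv]
    exact ⟨(isRanking_append_append_iff hπ).2 ⟨hBA, huv⟩, ⟨u, v, rfl⟩, hσ'.2⟩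
  · simp only [coe_filter, Set.mem_ofPred_eq, mem_rankings] at hσ
    exact substWord_restrictWord hBA hπ hb hσ.1 hσ.2.1
  · simp only [coe_filter, Set.mem_ofPred_eq, mem_rankings] at hσ'
    obtain ⟨u, v, rfl, huv⟩ := hσ'.1.exists_eq_append_cons hBA hb
    dsimp only
    rw [substWord_append_cons _ (huv.notMem_of_sdiff hb), restrictWord_append_append hBA hπ hb huv]

theorem eq_of_restrictWord_eq (hBA : B ⊆ A) (hπ : IsRanking B π) (hb : b ∈ B)
    (hσ : IsRanking A σ) (hτ : IsRanking A τ) (hπσ : π <:+: σ) (hπτ : π <:+: τ)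
    (h : restrictWord σ (A \ B.erase b) = restrictWord τ (A \ B.erase b)) : σ = τ := by
  rw [← substWord_restrictWord hBA hπ hb hσ hπσ, h, substWord_restrictWord hBA hπ hb hτ hπτ]

theorem card_filter_restrictWord_eq_infix_mul (hA'A : A' ⊆ A) (hBA : B ⊆ A)
    (hπ : IsRanking B π) (hτ : IsRanking A' τ) (hb : b ∈ B) (hbA' : b ∈ A' ∨ Disjoint B A') :
    #{σ ∈ rankings n A | restrictWord σ A' = τ ∧ π <:+: σ} * (#(A' \ B.erase b))! =
      if restrictWord π A' <:+: τ then (#(A \ B.erase b))! else 0 := by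
  split_ifs with hπτ
  · have hDA : A' \ B.erase b ⊆ A \ B.erase b := sdiff_subset_sdiff hA'A subset_rfl
    have hDA' : A' \ B.erase b ⊆ A' := sdiff_subset
    have hinfix : ∀ σ ∈ rankings n A, (restrictWord σ A' = τ ∧ π <:+: σ ↔ π <:+: σ ∧
        restrictWord (restrictWord σ (A \ B.erase b)) (A' \ B.erase b) =
          restrictWord τ (A' \ B.erase b)) := by
      intro σ hσ
      rw [restrictWord_restrictWord σ hDA, ← restrictWord_restrictWord σ hDA', and_comm]
      refine and_congr_right fun hπσ => ⟨fun h => h ▸ rfl, fun h => ?_⟩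
      have hσA' : IsRanking A' (restrictWord σ A') := by
        simpa only [inter_eq_right.2 hA'A] using (mem_rankings.1 hσ).restrict A'
      rcases hbA' with hbA' | hdisj
      · have hD : A' \ (B ∩ A').erase b = A' \ B.erase b := by
          ext x
          simp only [mem_sdiff, mem_erase, mem_inter]
          tauto
        rw [← hD] at h
        exact eq_of_restrictWord_eq inter_subset_right (hπ.restrict A') (mem_inter.2 ⟨hb, hbA'⟩)
          hσA' hτ (hπσ.filter _) hπτ h
      · rwa [sdiff_eq_self_of_disjoint ((hdisj.mono_left (erase_subset b B)).symm),
          hσA'.restrictWord_self, hτ.restrictWord_self] at h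
    rw [filter_congr hinfix, card_filter_infix hBA hπ hb
      (fun σ' => restrictWord σ' (A' \ B.erase b) = restrictWord τ (A' \ B.erase b))]
    refine card_filter_restrictWord_mul hDA ?_
    simpa only [inter_eq_right.2 hDA'] using hτ.restrict (A' \ B.erase b)
  · rw [card_eq_zero.2 (filter_eq_empty_iff.2 fun σ _ ⟨hστ, hπσ⟩ => hπτ (hστ ▸ hπσ.filter _)),
      zero_mul]

end Contraction

section Synthesis

variable {n : ℕ} {A A' B C : Finset (Fin n)} {F G : Word n → ℝ} {σ τ ρ : Word n} {b : Fin n}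

theorem MemL.sum_allWords (hG : MemL A G) {f : Word n → ℝ} (hf : ∀ w, G w = 0 → f w = 0) :
    ∑ w ∈ allWords n, f w = ∑ w ∈ rankings n A, f w := by
  refine (sum_subset rankings_subset_allWords fun w _ hw => hf w ?_).symm
  by_contra h
  exact hw (mem_rankings.2 (hG w h))

theorem memL_synth (A : Finset (Fin n)) (F : Word n → ℝ) : MemL A (synth A F) := fun w h => by
  by_contra hw
  exact h (if_neg hw)

theorem marg_inter_apply (hG : MemL A G) (hρ : IsRanking (A ∩ C) ρ) :
    marg (A ∩ C) G ρ = ∑ σ ∈ rankings n A with restrictWord σ C = ρ, G σ := by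
  rw [marg, if_pos hρ, hG.sum_allWords fun σ h => by simp [h], sum_filter]
  exact sum_congr rfl fun σ hσ =>
    if_congr (sublist_iff_restrictWord_eq (mem_rankings.1 hσ) hρ) rfl rfl

theorem marg_synth_apply (hA'A : A' ⊆ A) (hτ : IsRanking A' τ) :
    marg A' (synth A F) τ = ∑ σ ∈ rankings n A with restrictWord σ A' = τ, synth A F σ := by
  have h := marg_inter_apply (memL_synth A F) (C := A') (by rwa [inter_eq_right.2 hA'A])
  rwa [inter_eq_right.2 hA'A] at h

theorem synth_apply_of_memL_empty (hF : MemL ∅ F) (hσ : IsRanking A σ) :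
    synth A F σ = F [] / (#A)! := by
  rw [synth, if_pos hσ, add_eq_left]
  refine sum_eq_zero fun π _ => ite_eq_right_iff.2 fun hπ => ?_
  rw [show F π = 0 from by_contra fun h => hπ.1 (isRanking_empty_iff.1 (hF π h)), zero_div]

theorem synth_apply_of_memL (hF : MemL B F) (hB : B.Nonempty) (hσ : IsRanking A σ) :
    synth A F σ = (∑ π ∈ rankings n B, if π <:+: σ then F π else 0) / (#A - #B + 1)! := by
  have hF₀ : F [] = 0 := by_contra fun h => (hF [] h).ne_nil hB rfl
  rw [synth, if_pos hσ, hF₀, zero_div, zero_add, hF.sum_allWords fun π h => by simp [h], sum_div]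
  refine sum_congr rfl fun π hπ => ?_
  have hπB := mem_rankings.1 hπ
  rw [hπB.length_eq, ite_div, zero_div]
  exact if_congr (and_iff_right (hπB.ne_nil hB)) rfl rfl

theorem mul_div_factorial_of_mul_eq {N d a : ℕ} (h : N * d ! = a !) (x : ℝ) :
    x * N / a ! = x / d ! := by
  have hN : (N : ℝ) ≠ 0 := by exact_mod_cast left_ne_zero_of_mul (h ▸ Nat.factorial_ne_zero a)
  rw [← h, Nat.cast_mul, mul_comm x, mul_div_mul_left _ _ hN]

theorem marg_synth_apply_of_memL_empty (hA'A : A' ⊆ A) (hF : MemL ∅ F) (hτ : IsRanking A' τ) :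
    marg A' (synth A F) τ = F [] / (#A')! := by
  rw [marg_synth_apply hA'A hτ, sum_congr rfl fun σ hσ =>
    synth_apply_of_memL_empty hF (mem_rankings.1 (mem_filter.1 hσ).1), sum_const, nsmul_eq_mul,
    mul_div_assoc', mul_comm]
  exact mul_div_factorial_of_mul_eq (card_filter_restrictWord_mul hA'A hτ) _

theorem marg_synth_apply_of_memL (hA'A : A' ⊆ A) (hBA : B ⊆ A) (hF : MemL B F)
    (hτ : IsRanking A' τ) (hb : b ∈ B) (hbA' : b ∈ A' ∨ Disjoint B A') :
    marg A' (synth A F) τ =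
      (∑ π ∈ rankings n B, if restrictWord π A' <:+: τ then F π else 0) / (#(A' \ B.erase b))! := by
  rw [marg_synth_apply hA'A hτ]
  calc ∑ σ ∈ rankings n A with restrictWord σ A' = τ, synth A F σ
      = ∑ π ∈ rankings n B,
          F π * #{σ ∈ rankings n A | restrictWord σ A' = τ ∧ π <:+: σ} / (#(A \ B.erase b))! := by
        rw [sum_congr rfl fun σ hσ =>
          synth_apply_of_memL hF ⟨b, hb⟩ (mem_rankings.1 (mem_filter.1 hσ).1),
          ← sum_div, sum_comm, card_sdiff_erase hBA hb, sum_div]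
        refine sum_congr rfl fun π _ => ?_
        rw [sum_ite, sum_const_zero, add_zero, sum_const, nsmul_eq_mul, filter_filter, mul_comm]
    _ = _ := by
        rw [sum_div]
        refine sum_congr rfl fun π hπ => ?_
        have h := card_filter_restrictWord_eq_infix_mul hA'A hBA (mem_rankings.1 hπ) hτ hb hbA'
        split_ifs at h ⊢
        · exact mul_div_factorial_of_mul_eq h (F π)
        · rw [(Nat.mul_eq_zero.1 h).resolve_right (Nat.factorial_ne_zero _)]
          simp

end Synthesis

section Localization

variable {n : ℕ} {A A' B B' : Finset (Fin n)} {F : Word n → ℝ}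

theorem MemH.marg_eq_zero (hF : MemH B F) (hB : 2 ≤ #B ∨ B = ∅) (hB' : B' ⊂ B) :
    marg B' F = 0 := by
  by_cases hB'₂ : 2 ≤ #B'
  · exact hF.2.1 B' hB' hB'₂
  -- for `#B' ≤ 1` the marginal is the total mass, which vanishes on `H_B`
  have hB₂ : 2 ≤ #B := hB.resolve_right <| by
    rintro rfl
    exact not_ssubset_empty _ hB'
  funext ρ
  by_cases hρ : IsRanking B' ρ
  · have hρ' : IsRanking (B ∩ B') ρ := by rwa [inter_eq_right.2 hB'.subset]
    have h := marg_inter_apply hF.1 hρ'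
    rw [inter_eq_right.2 hB'.subset] at h
    rw [h, filter_true_of_mem fun π hπ => ?_, Pi.zero_apply, hF.2.2 hB₂]
    have hΓ : #(rankings n B') ≤ 1 := by
      rw [card_rankings]
      exact (Nat.factorial_eq_one.2 (by omega)).le
    refine card_le_one.1 hΓ _ (mem_rankings.2 ?_) _ (mem_rankings.2 hρ)
    simpa only [inter_eq_right.2 hB'.subset] using (mem_rankings.1 hπ).restrict B'
  · simp [marg, hρ]

theorem MemH.sum_ite_restrictWord_infix (hF : MemH B F) (hB : 2 ≤ #B ∨ B = ∅) (hBA' : ¬B ⊆ A')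
    (τ : Word n) : ∑ π ∈ rankings n B, (if restrictWord π A' <:+: τ then F π else 0) = 0 := by
  have hmaps : ∀ π ∈ rankings n B, restrictWord π A' ∈ rankings n (B ∩ A') :=
    fun π hπ => mem_rankings.2 ((mem_rankings.1 hπ).restrict A')
  rw [← sum_fiberwise_of_maps_to hmaps]
  refine sum_eq_zero fun ρ hρ => ?_
  rw [sum_congr rfl fun π hπ => by rw [(mem_filter.1 hπ).2], sum_ite_irrel, sum_const_zero,
    ← marg_inter_apply hF.1 (mem_rankings.1 hρ),
    hF.marg_eq_zero hB (ssubset_of_subset_not_subset inter_subset_left fun h => ?_)]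
  · simp
  · exact hBA' fun x hx => (mem_inter.1 (h hx)).2

theorem marg_synth_of_subset (hA'A : A' ⊆ A) (hBA : B ⊆ A) (hF : MemL B F) (hBA' : B ⊆ A') :
    marg A' (synth A F) = synth A' F := by
  funext τ
  by_cases hτ : IsRanking A' τ
  · rcases B.eq_empty_or_nonempty with rfl | ⟨b, hb⟩
    · rw [marg_synth_apply_of_memL_empty hA'A hF hτ, synth_apply_of_memL_empty hF hτ]
    · rw [marg_synth_apply_of_memL hA'A hBA hF hτ hb (Or.inl (hBA' hb)),
        synth_apply_of_memL hF ⟨b, hb⟩ hτ, card_sdiff_erase hBA' hb]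
      congr 1
      refine sum_congr rfl fun π hπ => ?_
      rw [restrictWord_eq_self fun x hx => hBA' ((mem_rankings.1 hπ).mem_iff.1 hx)]
  · simp [marg, synth, hτ]

theorem marg_synth_of_not_subset (hA'A : A' ⊆ A) (hBA : B ⊆ A) (hF : MemH B F)
    (hB : 2 ≤ #B ∨ B = ∅) (hBA' : ¬B ⊆ A') : marg A' (synth A F) = 0 := by
  funext τ
  by_cases hτ : IsRanking A' τ
  · obtain ⟨b, hb, hbA'⟩ : ∃ b ∈ B, b ∈ A' ∨ Disjoint B A' := by
      by_cases hdisj : Disjoint B A'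
      · obtain ⟨b, hb⟩ := nonempty_of_ne_empty (s := B) <| by
          rintro rfl
          exact hBA' (empty_subset A')
        exact ⟨b, hb, Or.inr hdisj⟩
      · obtain ⟨b, hb, hbA'⟩ := not_disjoint_iff.1 hdisj
        exact ⟨b, hb, Or.inl hbA'⟩
    rw [marg_synth_apply_of_memL hA'A hBA hF.1 hτ hb hbA', hF.sum_ite_restrictWord_infix hB hBA',
      zero_div, Pi.zero_apply]
  · simp [marg, hτ]

end Localization

theorem marg_synth_of_memH_general {n : ℕ}
    (A : Finset (Fin n))
    (B : Finset (Fin n)) (hB : B ∈ Pbar A)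
    (F : Word n → ℝ) (hF : MemH B F)
    (A' : Finset (Fin n)) (hA'A : A' ⊆ A) :
    (B ⊆ A' → marg A' (synth A F) = synth A' F) ∧
    (¬ B ⊆ A' → marg A' (synth A F) = 0) ∧
    (B ≠ ∅ → marg ∅ (synth A F) = 0) := by
  obtain ⟨hBA, hB₂⟩ : B ⊆ A ∧ (2 ≤ #B ∨ B = ∅) := by simpa [Pbar] using hB
  refine ⟨marg_synth_of_subset hA'A hBA hF.1, marg_synth_of_not_subset hA'A hBA hF hB₂,
    fun hB₀ => marg_synth_of_not_subset (empty_subset A) hBA hF hB₂ (hB₀ ∘ subset_empty.1)⟩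

/-- **Compatibility of synthesis with marginals on localization spaces.**
Let `A ⊆ [n]` with `|A| ≥ 2`, `B ∈ P̄(A)`, `F ∈ H_B`, and `A' ⊆ A` with `|A'| ≥ 2`.
If `B ⊆ A'` then `M_{A'}(φ_A F) = φ_{A'} F`; if `B ⊄ A'` then `M_{A'}(φ_A F) = 0`.
Moreover, if `B ≠ ∅` then `M_∅(φ_A F) = 0`. -/
theorem marg_synth_of_memH {n : ℕ} (hn : 2 ≤ n)
    (A : Finset (Fin n)) (hA : 2 ≤ A.card)
    (B : Finset (Fin n)) (hB : B ∈ Pbar A)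
    (F : Word n → ℝ) (hF : MemH B F)
    (A' : Finset (Fin n)) (hA'A : A' ⊆ A) (hA' : 2 ≤ A'.card) :
    (B ⊆ A' → marg A' (synth A F) = synth A' F) ∧
    (¬ B ⊆ A' → marg A' (synth A F) = 0) ∧
    (B ≠ ∅ → marg ∅ (synth A F) = 0) :=
  marg_synth_of_memH_general A B hB F hF A' hA'A
end

section
/- Evaluation formula for sums of synthesized functions: let A ⊆ [n] with |A| = k ≥ 2, let (X_B)_{B∈P̄(A)} be any family with X_B ∈ L(Γ(B)) for each B ∈ P̄(A), and let π = π₁π₂…π_k ∈ Γ(A). Then Σ_{B∈P̄(A)} φ_A X_B(π) = (1/k!)·X_∅(0̄) + Σ_{1≤i<j≤k} (1/(k−j+i)!)·X_{C(i,j)}(π_i π_{i+1} … π_j), where C(i,j) := {π_i,…,π_j} is the content of the contiguous subword π_i…π_j. -/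
open Finset
open scoped List

/-! Evaluated at `π ∈ Γ(A)`, each `φ_A X_B` sums `X_B` over the nonempty infixes `w` of `π`.
Since `X_B` is supported on `Γ(B)`, exchanging the two sums leaves one term `X_{C}(w)` per infix,
`C` the content of `w`, and it survives exactly when `C ∈ P̄(A)`, i.e. when `|w| ≥ 2` (the empty
word being accounted for separately). As `π` is duplicate-free, its infixes of length `≥ 2` are in
bijection with the index pairs `i < j` through `w = π_i … π_j`. -/

namespace List

variable {α : Type*}

theorem drop_take_infix (l : List α) (i m : ℕ) : (l.drop i).take m <:+: l :=
  infix_iff_prefix_suffix.mpr ⟨l.drop i, take_prefix _ _, drop_suffix _ _⟩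

theorem length_drop_take_of_add_le {l : List α} {i m : ℕ} (h : i + m ≤ l.length) :
    ((l.drop i).take m).length = m := by
  simp only [length_take, length_drop]
  omega

theorem IsInfix.exists_drop_take_eq {w l : List α} (h : w <:+: l) :
    ∃ i, i + w.length ≤ l.length ∧ (l.drop i).take w.length = w := by
  obtain ⟨s, t, rfl⟩ := h
  refine ⟨s.length, by simp only [length_append]; omega, ?_⟩
  rw [append_assoc, drop_left, take_left]

theorem Nodup.drop_take_inj {l : List α} (hl : l.Nodup) {i i' m m' : ℕ} (hm : 0 < m)
    (h : i + m ≤ l.length) (h' : i' + m' ≤ l.length)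
    (heq : (l.drop i).take m = (l.drop i').take m') : i = i' ∧ m = m' := by
  have hlen := congrArg length heq
  rw [length_drop_take_of_add_le h, length_drop_take_of_add_le h'] at hlen
  have hhead : l[i] = l[i'] := by
    have hfirst := getElem_of_eq heq (by rw [length_drop_take_of_add_le h]; exact hm)
    simpa using hfirst
  exact ⟨(hl.getElem_inj_iff).mp hhead, hlen⟩

theorem Nodup.sum_filter_infix_eq_sum_drop_take {β : Type*} [DecidableEq α] [AddCommMonoid β]
    {l : List α} (hl : l.Nodup) {S : Finset (List α)} (hS : ∀ w, w <:+: l → w ∈ S)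
    (g : List α → β) :
    ∑ w ∈ S with 2 ≤ w.length ∧ w <:+: l, g w =
      ∑ i ∈ Finset.range l.length, ∑ j ∈ Finset.range l.length,
        if i < j then g ((l.drop i).take (j - i + 1)) else 0 := by
  rw [← Finset.sum_product', ← Finset.sum_filter]
  symm
  refine Finset.sum_nbij (fun p => (l.drop p.1).take (p.2 - p.1 + 1)) ?_ ?_ ?_ fun _ _ => rfl
  · rintro ⟨i, j⟩ hij
    simp only [Finset.mem_filter, Finset.mem_product, Finset.mem_range] at hij ⊢
    refine ⟨hS _ (drop_take_infix _ _ _), ?_, drop_take_infix _ _ _⟩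
    rw [length_drop_take_of_add_le (by omega)]
    omega
  · rintro ⟨i, j⟩ hij ⟨i', j'⟩ hij' heq
    simp only [Finset.mem_coe, Finset.mem_filter, Finset.mem_product, Finset.mem_range]
      at hij hij'
    obtain ⟨rfl, hm⟩ := hl.drop_take_inj (by omega) (by omega) (by omega) heq
    simp only [Prod.mk.injEq, true_and]
    omega
  · intro w hw
    obtain ⟨-, hlen, hw⟩ := Finset.mem_filter.1 hw
    obtain ⟨i, hi, hwi⟩ := hw.exists_drop_take_eq
    refine ⟨(i, i + w.length - 1), ?_, ?_⟩
    · simp only [Finset.mem_coe, Finset.mem_filter, Finset.mem_product, Finset.mem_range]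
      omega
    · simp only
      rwa [show i + w.length - 1 - i + 1 = w.length by omega]

end List

section

variable {n : ℕ}

theorem mem_rankings_iff {B : Finset (Fin n)} {w : Word n} :
    w ∈ rankings n B ↔ IsRanking B w := by
  rw [rankings, List.mem_toFinset, List.mem_permutations]
  constructor
  · intro h
    exact ⟨h.symm.nodup B.nodup_toList, by rw [List.toFinset_eq_of_perm _ _ h, B.toList_toFinset]⟩
  · rintro ⟨hnd, rfl⟩
    exact List.perm_of_nodup_nodup_toFinset_eq hnd (Finset.nodup_toList _) (by simp)

theorem mem_allWords_iff {w : Word n} : w ∈ allWords n ↔ w.Nodup := by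
  simp only [allWords, Finset.mem_biUnion, Finset.mem_univ, true_and, mem_rankings_iff]
  exact ⟨fun ⟨_, h⟩ => h.1, fun h => ⟨w.toFinset, h, rfl⟩⟩

theorem sum_apply_eq_of_memL {S : Finset (Finset (Fin n))} {X : Finset (Fin n) → Word n → ℝ}
    (hX : ∀ B ∈ S, MemL B (X B)) (w : Word n) :
    ∑ B ∈ S, X B w = if w.toFinset ∈ S then X w.toFinset w else 0 := by
  split_ifs with hw
  · refine Finset.sum_eq_single_of_mem _ hw fun B hB hne => ?_
    by_contra h
    exact hne (hX B hB w h).2.symm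
  · refine Finset.sum_eq_zero fun B hB => ?_
    by_contra h
    exact hw ((hX B hB w h).2 ▸ hB)

theorem IsRanking.toFinset_mem_Pbar_iff_of_infix {A : Finset (Fin n)} {π w : Word n}
    (hπ : IsRanking A π) (hw : w <:+: π) :
    w.toFinset ∈ Pbar A ↔ 2 ≤ w.length ∨ w = [] := by
  have hsub : w.toFinset ⊆ A := fun a ha =>
    hπ.2 ▸ List.mem_toFinset.2 (hw.subset (List.mem_toFinset.1 ha))
  rw [Pbar, Finset.mem_filter, Finset.mem_powerset, List.toFinset_card_of_nodup
    (hw.sublist.nodup hπ.1), List.toFinset_eq_empty_iff]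
  exact and_iff_right hsub

end

theorem eval_sum_synth_general {n : ℕ}
    (A : Finset (Fin n)) (k : ℕ) (hk : A.card = k)
    (X : Finset (Fin n) → Word n → ℝ) (hX : ∀ B ∈ Pbar A, MemL B (X B))
    (π : Word n) (hπ : IsRanking A π) (hπk : π.length = k) :
    (∑ B ∈ Pbar A, synth A (X B)) π =
      X ∅ [] / (Nat.factorial k : ℝ) +
        ∑ i ∈ Finset.range k, ∑ j ∈ Finset.range k,
          (if i < j then
            X ((π.drop i).take (j - i + 1)).toFinset ((π.drop i).take (j - i + 1)) /
              (Nat.factorial (k - j + i) : ℝ)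
          else 0) := by
  calc (∑ B ∈ Pbar A, synth A (X B)) π
      = (∑ B ∈ Pbar A, X B []) / (k.factorial : ℝ) + ∑ w ∈ allWords n,
          if w ≠ [] ∧ w <:+: π then
            (∑ B ∈ Pbar A, X B w) / ((k - w.length + 1).factorial : ℝ) else 0 := by
        simp only [Finset.sum_apply, synth, if_pos hπ, hk, Finset.sum_add_distrib, Finset.sum_div]
        rw [Finset.sum_comm]
        congr 1
        refine Finset.sum_congr rfl fun w _ => ?_
        split_ifs <;> simp
    _ = X ∅ [] / (k.factorial : ℝ) + ∑ w ∈ allWords n with 2 ≤ w.length ∧ w <:+: π,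
          X w.toFinset w / ((k - w.length + 1).factorial : ℝ) := by
        rw [Finset.sum_filter, sum_apply_eq_of_memL hX, if_pos (by simp [Pbar])]
        congr 1
        refine Finset.sum_congr rfl fun w _ => ?_
        by_cases hw : w <:+: π
        · simp only [sum_apply_eq_of_memL hX, hπ.toFinset_mem_Pbar_iff_of_infix hw]
          rcases w with _ | ⟨a, _ | ⟨b, w⟩⟩ <;> simp [hw]
        · simp [hw]
    _ = _ := by
        rw [hπ.1.sum_filter_infix_eq_sum_drop_take
          (fun w hw => mem_allWords_iff.2 (hw.sublist.nodup hπ.1)), hπk]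
        congr 1
        refine Finset.sum_congr rfl fun i _ => Finset.sum_congr rfl fun j hj => ?_
        split_ifs
        · rw [Finset.mem_range] at hj
          rw [List.length_drop_take_of_add_le (by omega),
            show k - (j - i + 1) + 1 = k - j + i by omega]
        · rfl

/-- **Evaluation formula for sums of synthesized functions.**
For `A` with `|A| = k ≥ 2`, a family `X_B ∈ L(Γ(B))` for `B ∈ P̄(A)`, and `π ∈ Γ(A)`:
`Σ_{B∈P̄(A)} φ_A X_B (π) = X_∅(0̄)/k! + Σ_{0≤i<j<k} X_{C(i,j)}(π_i…π_j)/(k−j+i)!`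
(indices `i, j` zero-based), where `π_i…π_j = (π.drop i).take (j−i+1)` and `C(i,j)` is its
content. -/
theorem eval_sum_synth {n : ℕ} (hn : 2 ≤ n)
    (A : Finset (Fin n)) (k : ℕ) (hk : A.card = k) (hk2 : 2 ≤ k)
    (X : Finset (Fin n) → Word n → ℝ) (hX : ∀ B ∈ Pbar A, MemL B (X B))
    (π : Word n) (hπ : IsRanking A π) (hπk : π.length = k) :
    (∑ B ∈ Pbar A, synth A (X B)) π =
      X ∅ [] / (Nat.factorial k : ℝ) +
        ∑ i ∈ Finset.range k, ∑ j ∈ Finset.range k,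
          (if i < j then
            X ((π.drop i).take (j - i + 1)).toFinset ((π.drop i).take (j - i + 1)) /
              (Nat.factorial (k - j + i) : ℝ)
          else 0) :=
  eval_sum_synth_general A k hk X hX π hπ hπk
end
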